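/- Let Y be a finite set and ℓ: Y × Y → ℝ a symmetric loss with ℓ(y,y) = 0 for all y. Then there exist m ∈ ℕ, maps ψ, φ: Y → ℝ^m, and a constant c ≥ 0 such that for all y, z ∈ Y, ℓ(y,z) = ⟨ψ(y), ψ(z)⟩ − ⟨φ(y), φ(z)⟩, and ‖ψ(y)‖ = ‖φ(y)‖ = c for all y ∈ Y. -/

import Mathlib

/-!
With `e_y` the standard basis of `ℝ^Y`, put `ψ y = e_y + ℓ(y, ·)/4` and `φ y = e_y - ℓ(y, ·)/4`.
Then `⟪ψ y, ψ z⟫ - ⟪φ y, φ z⟫ = (ℓ(z, y) + ℓ(y, z))/2 = ℓ(y, z)` by symmetry, and `ℓ(y, y) = 0`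
forces `‖ψ y‖ = ‖φ y‖`. Appending the common coordinate `√(R² - ‖ψ y‖²)` to both `ψ y` and `φ y`,
for a bound `R` of all these norms, does not change the differences of inner products and makes
every norm equal to `R`.
-/

open scoped RealInnerProductSpace

section

variable {E : Type*} [NormedAddCommGroup E] [InnerProductSpace ℝ E]

theorem inner_add_add_sub_inner_sub_sub (a b c d : E) :
    ⟪a + b, c + d⟫ - ⟪a - b, c - d⟫ = 2 * (⟪a, d⟫ + ⟪b, c⟫) := by
  simp only [inner_add_left, inner_add_right, inner_sub_left, inner_sub_right]
  ring

theorem norm_eq_norm_of_inner_self_sub_inner_self_eq_zero {u v : E}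
    (h : ⟪u, u⟫ - ⟪v, v⟫ = 0) : ‖u‖ = ‖v‖ := by
  rw [real_inner_self_eq_norm_sq, real_inner_self_eq_norm_sq, sub_eq_zero] at h
  exact (pow_left_inj₀ (norm_nonneg u) (norm_nonneg v) two_ne_zero).1 h

theorem exists_prod_inner_sub_inner_eq_of_norm_le {Y : Type*} (ψ φ : Y → E) {R : ℝ}
    (hnorm : ∀ y, ‖ψ y‖ = ‖φ y‖) (hR : ∀ y, ‖ψ y‖ ≤ R) :
    ∃ ψ' φ' : Y → WithLp 2 (E × ℝ),
      (∀ y z, ⟪ψ' y, ψ' z⟫ - ⟪φ' y, φ' z⟫ = ⟪ψ y, ψ z⟫ - ⟪φ y, φ z⟫) ∧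
      ∀ y, ‖ψ' y‖ = R ∧ ‖φ' y‖ = R := by
  set t : Y → ℝ := fun y => √(R ^ 2 - ‖ψ y‖ ^ 2)
  have ht : ∀ y, t y ^ 2 = R ^ 2 - ‖ψ y‖ ^ 2 := fun y =>
    Real.sq_sqrt (sub_nonneg.2 (pow_le_pow_left₀ (norm_nonneg _) (hR y) 2))
  have hnorm_append : ∀ (u : E) y, ‖u‖ = ‖ψ y‖ → ‖WithLp.toLp 2 (u, t y)‖ = R := by
    intro u y hu
    rw [← sq_eq_sq₀ (norm_nonneg _) ((norm_nonneg _).trans (hR y)), ← real_inner_self_eq_norm_sq,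
      WithLp.prod_inner_apply, real_inner_self_eq_norm_sq, hu]
    simp [ht]
  refine ⟨fun y => WithLp.toLp 2 (ψ y, t y), fun y => WithLp.toLp 2 (φ y, t y),
    fun y z => by simp, fun y => ⟨hnorm_append _ y rfl, hnorm_append _ y (hnorm y).symm⟩⟩

end

theorem EuclideanSpace.exists_inner_sub_inner_eq {Y : Type*} [Fintype Y] [DecidableEq Y]
    (ℓ : Y → Y → ℝ) (hsymm : ∀ y z, ℓ y z = ℓ z y) :
    ∃ ψ φ : Y → EuclideanSpace ℝ Y, ∀ y z, ℓ y z = ⟪ψ y, ψ z⟫ - ⟪φ y, φ z⟫ := by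
  refine ⟨fun y => single y 1 + (4⁻¹ : ℝ) • WithLp.toLp 2 (ℓ y),
    fun y => single y 1 - (4⁻¹ : ℝ) • WithLp.toLp 2 (ℓ y), fun y z => ?_⟩
  rw [inner_add_add_sub_inner_sub_sub]
  simp [inner_smul_left, inner_smul_right, inner_single_left, inner_single_right, hsymm z y]
  ring

theorem stmt_0 {Y : Type*} [Fintype Y] (ℓ : Y → Y → ℝ)
    (hsymm : ∀ y z, ℓ y z = ℓ z y) (hdiag : ∀ y, ℓ y y = 0) :
    ∃ (m : ℕ) (ψ φ : Y → EuclideanSpace ℝ (Fin m)) (c : ℝ), 0 ≤ c ∧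
      (∀ y z, ℓ y z = ⟪ψ y, ψ z⟫ - ⟪φ y, φ z⟫) ∧
      (∀ y, ‖ψ y‖ = c ∧ ‖φ y‖ = c) := by
  classical
  obtain ⟨ψ, φ, hℓ⟩ := EuclideanSpace.exists_inner_sub_inner_eq ℓ hsymm
  have hnorm y : ‖ψ y‖ = ‖φ y‖ :=
    norm_eq_norm_of_inner_self_sub_inner_self_eq_zero ((hℓ y y).symm.trans (hdiag y))
  obtain ⟨ψ', φ', hinner, hnorm'⟩ := exists_prod_inner_sub_inner_eq_of_norm_le ψ φ hnorm
    (R := ∑ y, ‖ψ y‖) fun y => Finset.single_le_sum (fun z _ => norm_nonneg (ψ z)) (Finset.mem_univ y)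
  let e := (stdOrthonormalBasis ℝ (WithLp 2 (EuclideanSpace ℝ Y × ℝ))).repr
  refine ⟨_, e ∘ ψ', e ∘ φ', ∑ y, ‖ψ y‖, by positivity, fun y z => ?_, fun y => ?_⟩
  · simp only [Function.comp_apply, LinearIsometryEquiv.inner_map_map, hinner, hℓ]
  · simp only [Function.comp_apply, LinearIsometryEquiv.norm_map]
    exact hnorm' y
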